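/- For every π ∈ S_∞, the operator ∇ = Σ_{i ≥ 1} ∂/∂x_i applied to the Schubert polynomial S_π gives ∇ S_π = Σ_{i ≥ 1, ℓ(r_i π) = ℓ(π) − 1} i · S_{r_i π}. In particular ∇ takes Schubert polynomials to nonnegative integer combinations of Schubert polynomials. -/

import Mathlib

open MvPolynomial

/-- The simple transposition `r_i = (i, i+1)` of `{1, 2, 3, …}`. -/
def simpleTransposition (i : ℕ+) : Equiv.Perm ℕ+ := Equiv.swap i (i + 1)

/-- A permutation of `{1, 2, 3, …}` moves only finitely many points. -/
def FinitelySupported (π : Equiv.Perm ℕ+) : Prop := {i : ℕ+ | π i ≠ i}.Finite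

/-- The Coxeter length of a finitely supported permutation of `{1, 2, 3, …}`:
the least length of a word in the simple transpositions expressing it. -/
noncomputable def len (π : Equiv.Perm ℕ+) : ℕ :=
  sInf {k : ℕ | ∃ l : List ℕ+, l.length = k ∧ π = (l.map simpleTransposition).prod}

/-- The set of reduced words for `π`. -/
def RW (π : Equiv.Perm ℕ+) : Set (List ℕ+) :=
  {l : List ℕ+ | l.length = len π ∧ π = (l.map simpleTransposition).prod}

/-- `i ↦ n + 1 - i` on `{1, …, n}`, identity elsewhere. -/
def w0fun (n : ℕ) : ℕ+ → ℕ+ :=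
  fun i => if h : (i : ℕ) ≤ n then (⟨n + 1 - (i : ℕ), by omega⟩ : ℕ+) else i

theorem w0fun_involutive (n : ℕ) : Function.Involutive (w0fun n) := by
  intro i
  have hi : 1 ≤ (i : ℕ) := i.2
  have e1 : ∀ j : ℕ+, (j : ℕ) ≤ n → ((w0fun n j : ℕ+) : ℕ) = n + 1 - (j : ℕ) := by
    intro j hj
    have hj' : w0fun n j = (⟨n + 1 - (j : ℕ), by omega⟩ : ℕ+) := dif_pos hj
    rw [hj']
    rfl
  have e2 : ∀ j : ℕ+, ¬ (j : ℕ) ≤ n → w0fun n j = j := by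
    intro j hj
    exact dif_neg hj
  apply PNat.coe_injective
  by_cases h1 : (i : ℕ) ≤ n
  · have h2 : ((w0fun n i : ℕ+) : ℕ) ≤ n := by rw [e1 i h1]; omega
    rw [e1 _ h2, e1 i h1]
    omega
  · rw [e2 i h1, e2 i h1]

/-- The longest element `w₀` of `S_n ⊆ S_∞`, i.e. `i ↦ n + 1 - i` on `{1, …, n}`. -/
def w0 (n : ℕ) : Equiv.Perm ℕ+ := Function.Involutive.toPerm (w0fun n) (w0fun_involutive n)

/-- The property defining Schubert polynomials: `S_{w₀} = x₁^{n-1} x₂^{n-2} ⋯ x_{n-1}`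
for the longest element `w₀` of each `S_n`, together with
`∂_i S_π = S_{π rᵢ}` whenever `ℓ(π rᵢ) = ℓ(π) − 1`, the latter encoded
denominator-free as `(xᵢ − xᵢ₊₁) · S_{π rᵢ} = S_π − sᵢ(S_π)`. -/
def IsSchubertFamily {R : Type*} [CommRing R] (SP : Equiv.Perm ℕ+ → MvPolynomial ℕ+ R) : Prop :=
  (∀ n : ℕ, SP (w0 n)
      = ∏ i ∈ Finset.range n, (X (⟨i + 1, Nat.succ_pos i⟩ : ℕ+) : MvPolynomial ℕ+ R) ^ (n - 1 - i))
  ∧ (∀ π : Equiv.Perm ℕ+, FinitelySupported π → ∀ i : ℕ+,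
      len (π * simpleTransposition i) + 1 = len π →
      (X i - X (i + 1)) * SP (π * simpleTransposition i)
        = SP π - rename (Equiv.swap i (i + 1)) (SP π))

/-- The operator `∇ = Σ_{i ≥ 1} ∂/∂xᵢ` on `ℤ[x₁, x₂, …]`. -/
noncomputable def nabla (f : MvPolynomial ℕ+ ℤ) : MvPolynomial ℕ+ ℤ :=
  ∑ᶠ i : ℕ+, pderiv i f

/-!
For finitely supported permutations the Coxeter length is the number of inversions, so
`ℓ(π rᵢ) = ℓ(π) ± 1` according to whether `i` is an ascent or a descent of `π`; in particular
`∂ᵢ S_π` is `S_{π rᵢ}` at a descent and `0` at an ascent (there `S_π = ∂ᵢ S_{π rᵢ}` is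
`sᵢ`-symmetric). Since `∇` is a derivation with `∇(xᵢ - xᵢ₊₁) = 0` that commutes with `sᵢ`,
it commutes with `∂ᵢ`.

The formula is checked directly for `w₀ ∈ S_N`, where `S_{w₀} = x^δ` and `∂ₖ x^δ = x^{δ - eₖ}`.
It then descends: if `ℓ(π rᵢ) = ℓ(π) + 1`, apply `∂ᵢ` termwise to the formula for `π rᵢ`. The
term `j S_{rⱼ π rᵢ}` becomes `j S_{rⱼ π}` or `0`, and comparing lengths shows that this is
exactly the `j`-th term of the formula for `π`. Every permutation of `{1, …, N}` other than `w₀`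
has such an ascent `i < N`, and the length is bounded there, so induction on `ℓ` from the top
covers all of them.
-/

local notation "r" => simpleTransposition

section SimpleTransposition

theorem simpleTransposition_coe (i x : ℕ+) :
    (r i x : ℕ) = if (x : ℕ) = i then (i : ℕ) + 1 else if (x : ℕ) = i + 1 then i else x := by
  simp only [simpleTransposition, Equiv.swap_apply_def, ← PNat.coe_inj, PNat.add_coe,
    PNat.one_coe]
  split_ifs <;> rfl

@[simp]
theorem simpleTransposition_apply_self (i : ℕ+) : r i i = i + 1 :=
  Equiv.swap_apply_left _ _

@[simp]
theorem simpleTransposition_apply_add_one (i : ℕ+) : r i (i + 1) = i :=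
  Equiv.swap_apply_right _ _

@[simp]
theorem simpleTransposition_mul_self (i : ℕ+) : r i * r i = 1 :=
  Equiv.swap_mul_self _ _

@[simp]
theorem simpleTransposition_symm (i : ℕ+) : (r i).symm = r i :=
  Equiv.symm_swap _ _

@[simp]
theorem simpleTransposition_inv (i : ℕ+) : (r i)⁻¹ = r i :=
  Equiv.swap_inv _ _

theorem simpleTransposition_lt_simpleTransposition_iff {i a b : ℕ+}
    (h₁ : ¬(a = i ∧ b = i + 1)) (h₂ : ¬(a = i + 1 ∧ b = i)) : r i a < r i b ↔ a < b := by
  simp only [← PNat.coe_lt_coe, simpleTransposition_coe, ← PNat.coe_inj, PNat.add_coe,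
    PNat.one_coe] at *
  split_ifs <;> omega

theorem finitelySupported_simpleTransposition (i : ℕ+) : FinitelySupported (r i) :=
  (Set.toFinite {i, i + 1}).subset fun x hx => by
    by_contra h
    simp only [Set.mem_insert_iff, Set.mem_singleton_iff, not_or] at h
    exact hx (Equiv.swap_apply_of_ne_of_ne h.1 h.2)

theorem FinitelySupported.mul {π σ : Equiv.Perm ℕ+} (hπ : FinitelySupported π)
    (hσ : FinitelySupported σ) : FinitelySupported (π * σ) :=
  (hπ.union hσ).subset fun x hx => by
    by_contra h
    simp only [Set.mem_union, Set.mem_ofPred_eq, not_or, not_not] at h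
    exact hx (by simp [h.1, h.2])

theorem FinitelySupported.inv {π : Equiv.Perm ℕ+} (hπ : FinitelySupported π) :
    FinitelySupported π⁻¹ :=
  hπ.subset fun x hx h => hx (by rw [Equiv.Perm.inv_eq_iff_eq, h])

theorem finitelySupported_prod_map_simpleTransposition (l : List ℕ+) :
    FinitelySupported (l.map r).prod := by
  induction l with
  | nil => simp [FinitelySupported]
  | cons i l ih => simpa using (finitelySupported_simpleTransposition i).mul ih

end SimpleTransposition

section FixesAbove

def FixesAbove (N : ℕ+) (π : Equiv.Perm ℕ+) : Prop := ∀ i, N < i → π i = i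

theorem FinitelySupported.exists_fixesAbove {π : Equiv.Perm ℕ+} (hπ : FinitelySupported π) :
    ∃ N, FixesAbove N π := by
  obtain ⟨N, hN⟩ := hπ.bddAbove
  exact ⟨N, fun i hi => not_not.mp fun h => hi.not_ge (hN h)⟩

theorem fixesAbove_simpleTransposition {N i : ℕ+} (hi : i < N) : FixesAbove N (r i) := by
  intro j hj
  rw [← PNat.coe_inj, simpleTransposition_coe]
  rw [← PNat.coe_lt_coe] at hi hj
  split_ifs <;> omega

namespace FixesAbove

variable {N : ℕ+} {π σ : Equiv.Perm ℕ+}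

theorem finitelySupported (hπ : FixesAbove N π) : FinitelySupported π :=
  (Set.finite_Iic N).subset fun i hi => not_lt.mp fun h => hi (hπ i h)

theorem inv (hπ : FixesAbove N π) : FixesAbove N π⁻¹ :=
  fun i hi => Equiv.Perm.inv_eq_iff_eq.mpr (hπ i hi).symm

theorem mul (hπ : FixesAbove N π) (hσ : FixesAbove N σ) : FixesAbove N (π * σ) :=
  fun i hi => by rw [Equiv.Perm.mul_apply, hσ i hi, hπ i hi]

theorem apply_le (hπ : FixesAbove N π) {i : ℕ+} (hi : i ≤ N) : π i ≤ N :=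
  not_lt.mp fun h => hi.not_gt (π.injective (hπ _ h) ▸ h)

end FixesAbove

end FixesAbove

section Inversions

def inversions (π : Equiv.Perm ℕ+) : Set (ℕ+ × ℕ+) := {p | p.1 < p.2 ∧ π p.2 < π p.1}

noncomputable def invCount (π : Equiv.Perm ℕ+) : ℕ := (inversions π).ncard

theorem invCount_one : invCount 1 = 0 := by
  have : inversions 1 = ∅ := Set.eq_empty_of_forall_notMem fun p hp => hp.1.not_gt hp.2
  rw [invCount, this, Set.ncard_empty]

theorem FixesAbove.inversions_subset {N : ℕ+} {π : Equiv.Perm ℕ+} (hπ : FixesAbove N π) :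
    inversions π ⊆ Set.Iic (N, N) := by
  rintro ⟨a, b⟩ ⟨hab, hinv⟩
  suffices b ≤ N from ⟨hab.le.trans this, this⟩
  by_contra! hb
  rw [hπ b hb] at hinv
  by_cases ha : a ≤ N
  · exact (hπ.apply_le ha).not_gt (hb.trans hinv)
  · rw [hπ a (not_le.mp ha)] at hinv
    exact hab.not_gt hinv

theorem FinitelySupported.inversions_finite {π : Equiv.Perm ℕ+} (hπ : FinitelySupported π) :
    (inversions π).Finite :=
  let ⟨N, hN⟩ := hπ.exists_fixesAbove
  (Set.finite_Iic (N, N)).subset hN.inversions_subset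

theorem inversions_mul_simpleTransposition {π : Equiv.Perm ℕ+} {i : ℕ+} (h : π i < π (i + 1)) :
    inversions (π * r i) = insert (i, i + 1) (Equiv.prodCongr (r i) (r i) '' inversions π) := by
  ext ⟨a, b⟩
  rw [Set.mem_insert_iff, Set.mem_image_equiv]
  simp only [inversions, Set.mem_ofPred_eq, Prod.mk.injEq, Equiv.prodCongr_symm,
    Equiv.prodCongr_apply, Prod.map, simpleTransposition_symm, Equiv.Perm.mul_apply]
  by_cases h₁ : a = i ∧ b = i + 1
  · obtain ⟨rfl, rfl⟩ := h₁
    simpa using h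
  by_cases h₂ : a = i + 1 ∧ b = i
  · obtain ⟨rfl, rfl⟩ := h₂
    simp [h.not_gt, (PNat.lt_add_right b 1).not_gt, (PNat.lt_add_right b 1).ne']
  rw [simpleTransposition_lt_simpleTransposition_iff h₁ h₂]
  tauto

theorem invCount_mul_simpleTransposition_of_lt {π : Equiv.Perm ℕ+} (hπ : FinitelySupported π)
    {i : ℕ+} (h : π i < π (i + 1)) : invCount (π * r i) = invCount π + 1 := by
  have hnotMem : (i, i + 1) ∉ Equiv.prodCongr (r i) (r i) '' inversions π := by
    rw [Set.mem_image_equiv]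
    simp [inversions, (PNat.lt_add_right i 1).not_gt]
  rw [invCount, inversions_mul_simpleTransposition h,
    Set.ncard_insert_of_notMem hnotMem (hπ.inversions_finite.image _),
    Set.ncard_image_of_injective _ (Equiv.injective _), invCount]

theorem invCount_mul_simpleTransposition_of_gt {π : Equiv.Perm ℕ+} (hπ : FinitelySupported π)
    {i : ℕ+} (h : π (i + 1) < π i) : invCount (π * r i) + 1 = invCount π := by
  have h' : (π * r i) i < (π * r i) (i + 1) := by simpa using h
  have := invCount_mul_simpleTransposition_of_lt
    (hπ.mul (finitelySupported_simpleTransposition i)) h'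
  rw [mul_assoc, simpleTransposition_mul_self, mul_one] at this
  exact this.symm

theorem invCount_mul_simpleTransposition_le {π : Equiv.Perm ℕ+} (hπ : FinitelySupported π)
    (i : ℕ+) : invCount (π * r i) ≤ invCount π + 1 := by
  rcases lt_or_gt_of_ne (π.injective.ne (PNat.lt_add_right i 1).ne) with h | h
  · exact (invCount_mul_simpleTransposition_of_lt hπ h).le
  · have := invCount_mul_simpleTransposition_of_gt hπ h
    omega

theorem invCount_prod_map_simpleTransposition_le (l : List ℕ+) :
    invCount (l.map r).prod ≤ l.length := by
  induction l using List.reverseRecOn with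
  | nil => simp [invCount_one]
  | append_singleton l i ih =>
    have := invCount_mul_simpleTransposition_le
      (finitelySupported_prod_map_simpleTransposition l) i
    simp only [List.map_append, List.map_singleton, List.prod_append, List.prod_singleton,
      List.length_append, List.length_singleton]
    omega

theorem eq_one_of_forall_lt_apply_add_one {π : Equiv.Perm ℕ+} (h : ∀ i, π i < π (i + 1)) :
    π = 1 := by
  have hmono : StrictMono π := strictMono_of_lt_add_one fun i _ => h i
  ext x
  exact DFunLike.congr_fun
    (Subsingleton.elim (hmono.orderIsoOfSurjective π π.surjective) (OrderIso.refl ℕ+)) x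

theorem exists_word_length_le_invCount {π : Equiv.Perm ℕ+} (hπ : FinitelySupported π) :
    ∃ l : List ℕ+, l.length ≤ invCount π ∧ π = (l.map r).prod := by
  induction hn : invCount π using Nat.strong_induction_on generalizing π with
  | _ n ih =>
  by_cases hasc : ∀ i, π i < π (i + 1)
  · exact ⟨[], Nat.zero_le _, by simpa using eq_one_of_forall_lt_apply_add_one hasc⟩
  push Not at hasc
  obtain ⟨i, hi⟩ := hasc
  have hdesc : π (i + 1) < π i := hi.lt_of_ne (π.injective.ne (PNat.lt_add_right i 1).ne')
  have hcount := invCount_mul_simpleTransposition_of_gt hπ hdesc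
  obtain ⟨l, hl, hprod⟩ := ih _ (by omega) (hπ.mul (finitelySupported_simpleTransposition i)) rfl
  refine ⟨l ++ [i], by rw [List.length_append, List.length_singleton]; omega, ?_⟩
  simp [← hprod, mul_assoc]

end Inversions

section Length

theorem inv_prod_map_simpleTransposition (l : List ℕ+) :
    (l.map r).prod⁻¹ = (l.reverse.map r).prod := by
  simp [List.prod_inv_reverse, List.map_reverse, Function.comp_def]

theorem len_inv (π : Equiv.Perm ℕ+) : len π⁻¹ = len π := by
  have key : ∀ σ : Equiv.Perm ℕ+, ∀ k, (∃ l : List ℕ+, l.length = k ∧ σ = (l.map r).prod) →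
      ∃ l : List ℕ+, l.length = k ∧ σ⁻¹ = (l.map r).prod := by
    rintro σ k ⟨l, rfl, rfl⟩
    exact ⟨l.reverse, l.length_reverse, inv_prod_map_simpleTransposition l⟩
  unfold len
  congr 1
  ext k
  exact ⟨fun h => inv_inv π ▸ key _ k h, key π k⟩

theorem len_simpleTransposition_mul (i : ℕ+) (π : Equiv.Perm ℕ+) :
    len (r i * π) = len (π⁻¹ * r i) := by
  rw [← len_inv, mul_inv_rev, simpleTransposition_inv]

theorem len_eq_invCount {π : Equiv.Perm ℕ+} (hπ : FinitelySupported π) : len π = invCount π := by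
  obtain ⟨l, hl, hprod⟩ := exists_word_length_le_invCount hπ
  have hmem : l.length ∈ {k | ∃ l : List ℕ+, l.length = k ∧ π = (l.map r).prod} :=
    ⟨l, rfl, hprod⟩
  refine le_antisymm ((Nat.sInf_le hmem).trans hl) (le_csInf ⟨_, hmem⟩ ?_)
  rintro k ⟨l', rfl, rfl⟩
  exact invCount_prod_map_simpleTransposition_le l'

theorem FixesAbove.len_le {N : ℕ+} {π : Equiv.Perm ℕ+} (hπ : FixesAbove N π) :
    len π ≤ (Set.Iic (N, N)).ncard := by
  rw [len_eq_invCount hπ.finitelySupported]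
  exact Set.ncard_le_ncard hπ.inversions_subset (Set.finite_Iic _)

theorem len_mul_simpleTransposition_of_lt {π : Equiv.Perm ℕ+} (hπ : FinitelySupported π)
    {i : ℕ+} (h : π i < π (i + 1)) : len (π * r i) = len π + 1 := by
  rw [len_eq_invCount hπ, len_eq_invCount (hπ.mul (finitelySupported_simpleTransposition i)),
    invCount_mul_simpleTransposition_of_lt hπ h]

theorem len_mul_simpleTransposition_add_one_iff {π : Equiv.Perm ℕ+} (hπ : FinitelySupported π)
    {i : ℕ+} : len (π * r i) + 1 = len π ↔ π (i + 1) < π i := by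
  rw [len_eq_invCount hπ, len_eq_invCount (hπ.mul (finitelySupported_simpleTransposition i))]
  refine ⟨fun h => ?_, invCount_mul_simpleTransposition_of_gt hπ⟩
  refine (lt_or_gt_of_ne (π.injective.ne (PNat.lt_add_right i 1).ne')).resolve_right
    fun hlt => ?_
  have := invCount_mul_simpleTransposition_of_lt hπ hlt
  omega

theorem len_mul_simpleTransposition_eq_or {π : Equiv.Perm ℕ+} (hπ : FinitelySupported π)
    (i : ℕ+) : len (π * r i) = len π + 1 ∨ len (π * r i) + 1 = len π := by
  rcases lt_or_gt_of_ne (π.injective.ne (PNat.lt_add_right i 1).ne) with h | h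
  · exact .inl (len_mul_simpleTransposition_of_lt hπ h)
  · exact .inr ((len_mul_simpleTransposition_add_one_iff hπ).mpr h)

theorem len_simpleTransposition_mul_eq_or {π : Equiv.Perm ℕ+} (hπ : FinitelySupported π)
    (i : ℕ+) : len (r i * π) = len π + 1 ∨ len (r i * π) + 1 = len π := by
  simpa [len_simpleTransposition_mul, len_inv] using len_mul_simpleTransposition_eq_or hπ.inv i

end Length

section LongestElement

theorem w0_coe (n : ℕ) (x : ℕ+) : (w0 n x : ℕ) = if (x : ℕ) ≤ n then n + 1 - x else x := by
  change ((w0fun n x : ℕ+) : ℕ) = _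
  by_cases h : (x : ℕ) ≤ n <;> simp [w0fun, h]

@[simp]
theorem w0_mul_self (n : ℕ) : w0 n * w0 n = 1 :=
  Equiv.ext (w0fun_involutive n)

@[simp]
theorem w0_inv (n : ℕ) : (w0 n)⁻¹ = w0 n :=
  inv_eq_of_mul_eq_one_right (w0_mul_self n)

theorem fixesAbove_w0 {N : ℕ+} {n : ℕ} (hn : n ≤ N) : FixesAbove N (w0 n) := by
  intro i hi
  rw [← PNat.coe_inj, w0_coe, if_neg (by rw [← PNat.coe_lt_coe] at hi; omega)]

theorem finitelySupported_w0 (n : ℕ) : FinitelySupported (w0 n) :=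
  (fixesAbove_w0 (N := n.succPNat) n.le_succ).finitelySupported

theorem w0_apply_add_one_lt_iff (n : ℕ) (i : ℕ+) : w0 n (i + 1) < w0 n i ↔ (i : ℕ) < n := by
  rw [← PNat.coe_lt_coe, w0_coe, w0_coe, PNat.add_coe, PNat.one_coe]
  have := PNat.pos i
  split_ifs <;> omega

theorem len_simpleTransposition_mul_w0_add_one_iff (n : ℕ) (j : ℕ+) :
    len (r j * w0 n) + 1 = len (w0 n) ↔ (j : ℕ) < n := by
  rw [len_simpleTransposition_mul, w0_inv,
    len_mul_simpleTransposition_add_one_iff (finitelySupported_w0 n), w0_apply_add_one_lt_iff]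

theorem simpleTransposition_mul_w0 {n : ℕ} {j : ℕ+} (hj : (j : ℕ) < n) :
    r j * w0 n = w0 n * r (w0 (n - 1) j) := by
  ext x
  rw [← PNat.coe_inj]
  simp only [Equiv.Perm.mul_apply, simpleTransposition_coe, w0_coe]
  have := PNat.pos j
  have := PNat.pos x
  split_ifs <;> omega

theorem FixesAbove.eq_w0 {N : ℕ+} {π : Equiv.Perm ℕ+} (hπ : FixesAbove N π)
    (hdesc : ∀ i < N, π (i + 1) < π i) : π = w0 N := by
  suffices π * w0 N = 1 by
    rw [← mul_one π, ← w0_mul_self N, ← mul_assoc, this, one_mul]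
  refine eq_one_of_forall_lt_apply_add_one fun i => ?_
  simp only [Equiv.Perm.mul_apply]
  have hw0 : FixesAbove N (w0 N) := fixesAbove_w0 le_rfl
  rcases lt_trichotomy i N with hi | rfl | hi
  · have := PNat.pos i
    rw [← PNat.coe_lt_coe] at hi
    have hk : w0 N i = w0 N (i + 1) + 1 := by
      rw [← PNat.coe_inj, PNat.add_coe, w0_coe, w0_coe, PNat.add_coe, PNat.one_coe]
      split_ifs <;> omega
    have hkN : w0 N (i + 1) < N := by
      rw [← PNat.coe_lt_coe, w0_coe, PNat.add_coe, PNat.one_coe]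
      split_ifs <;> omega
    rw [hk]
    exact hdesc _ hkN
  · have hi : i < i + 1 := PNat.lt_add_right i 1
    rw [hw0 _ hi, hπ _ hi]
    exact (hπ.apply_le (hw0.apply_le le_rfl)).trans_lt hi
  · have hi' : N < i + 1 := hi.trans (PNat.lt_add_right i 1)
    rw [hw0 _ hi, hw0 _ hi', hπ _ hi, hπ _ hi']
    exact PNat.lt_add_right i 1

end LongestElement

section Nabla

theorem hasFiniteSupport_pderiv {R σ : Type*} [CommSemiring R] (f : MvPolynomial σ R) :
    Function.HasFiniteSupport fun i => pderiv i f :=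
  f.vars.finite_toSet.subset fun _ hi => by_contra fun h => hi (pderiv_eq_zero_of_notMem_vars h)

theorem rename_finsum {R σ τ ι : Type*} [CommSemiring R] (e : σ ≃ τ) (f : ι → MvPolynomial σ R) :
    rename e (∑ᶠ j, f j) = ∑ᶠ j, rename e (f j) :=
  AddEquivClass.map_finsum (renameEquiv R e) f

theorem nabla_sub (f g : MvPolynomial ℕ+ ℤ) : nabla (f - g) = nabla f - nabla g := by
  simp only [nabla, map_sub]
  exact finsum_sub_distrib (hasFiniteSupport_pderiv f) (hasFiniteSupport_pderiv g)

theorem nabla_mul (f g : MvPolynomial ℕ+ ℤ) : nabla (f * g) = nabla f * g + f * nabla g := by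
  rw [nabla, nabla, nabla, finsum_mul, mul_finsum,
    ← finsum_add_distrib ((hasFiniteSupport_pderiv f).fun_mul_left _)
      ((hasFiniteSupport_pderiv g).fun_mul_right _)]
  exact finsum_congr fun i => by rw [Derivation.leibniz, smul_eq_mul, smul_eq_mul]; ring

theorem nabla_X (i : ℕ+) : nabla (X i) = 1 := by
  rw [nabla, finsum_eq_single _ i fun j hj => pderiv_X_of_ne hj.symm, pderiv_X_self]

theorem nabla_X_sub_X (i j : ℕ+) : nabla (X i - X j) = 0 := by
  rw [nabla_sub, nabla_X, nabla_X, sub_self]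

theorem nabla_rename (e : Equiv.Perm ℕ+) (f : MvPolynomial ℕ+ ℤ) :
    nabla (rename e f) = rename e (nabla f) := by
  rw [nabla, ← finsum_comp_equiv e]
  simp only [pderiv_rename e.injective]
  rw [nabla, rename_finsum]

end Nabla

section DividedDifference

variable {R : Type*} [CommRing R]

/-- `g = ∂ᵢ f`, in the denominator-free form of `IsSchubertFamily`. -/
def HasDivDiff (i : ℕ+) (f g : MvPolynomial ℕ+ R) : Prop :=
  (X i - X (i + 1)) * g = f - rename (Equiv.swap i (i + 1)) f

theorem X_sub_X_add_one_ne_zero [Nontrivial R] (i : ℕ+) :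
    (X i - X (i + 1) : MvPolynomial ℕ+ R) ≠ 0 :=
  sub_ne_zero.mpr (X_injective.ne (PNat.lt_add_right i 1).ne)

theorem hasDivDiff_of_rename_swap {i : ℕ+} {f : MvPolynomial ℕ+ R}
    (h : rename (Equiv.swap i (i + 1)) f = f) : HasDivDiff i f 0 := by
  rw [HasDivDiff, h, mul_zero, sub_self]

namespace HasDivDiff

variable {i : ℕ+} {f g : MvPolynomial ℕ+ R}

theorem unique [IsDomain R] {g' : MvPolynomial ℕ+ R} (h : HasDivDiff i f g)
    (h' : HasDivDiff i f g') : g = g' :=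
  mul_left_cancel₀ (X_sub_X_add_one_ne_zero i) (h.trans h'.symm)

theorem rename_swap [IsDomain R] (h : HasDivDiff i f g) :
    rename (Equiv.swap i (i + 1)) g = g := by
  have hs := congrArg (rename (Equiv.swap i (i + 1))) h
  simp only [map_mul, map_sub, rename_X, Equiv.swap_apply_left, Equiv.swap_apply_right,
    rename_rename, Function.comp_def, Equiv.swap_apply_self, ← Function.id_def,
    rename_id_apply] at hs
  refine mul_left_cancel₀ (X_sub_X_add_one_ne_zero i) ?_
  rw [h]
  linear_combination -hs

theorem zsmul (h : HasDivDiff i f g) (c : ℤ) : HasDivDiff i (c • f) (c • g) := by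
  rw [HasDivDiff, mul_smul_comm, h, smul_sub, map_zsmul]

theorem finsum [IsDomain R] {ι : Type*} {f g : ι → MvPolynomial ℕ+ R}
    (h : ∀ j, HasDivDiff i (f j) (g j)) (hf : Function.HasFiniteSupport f) :
    HasDivDiff i (∑ᶠ j, f j) (∑ᶠ j, g j) := by
  rw [HasDivDiff, mul_finsum, finsum_congr h, finsum_sub_distrib hf (hf.fun_comp (map_zero _)),
    rename_finsum]

end HasDivDiff

theorem HasDivDiff.nabla {i : ℕ+} {f g : MvPolynomial ℕ+ ℤ} (h : HasDivDiff i f g) :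
    HasDivDiff i (nabla f) (nabla g) := by
  rw [HasDivDiff, ← nabla_rename, ← nabla_sub, ← h, nabla_mul, nabla_X_sub_X, zero_mul,
    zero_add]

end DividedDifference

section Staircase

noncomputable def staircase (n : ℕ) : ℕ+ →₀ ℕ :=
  ∑ m ∈ Finset.range n, Finsupp.single m.succPNat (n - 1 - m)

theorem staircase_apply (n : ℕ) (k : ℕ+) : staircase n k = n - k := by
  have := PNat.pos k
  have hterm (m : ℕ) : Finsupp.single m.succPNat (n - 1 - m) k
      = if (k : ℕ) - 1 = m then n - 1 - m else 0 := by
    rw [Finsupp.single_apply]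
    refine if_congr ?_ rfl rfl
    rw [← PNat.coe_inj, Nat.succPNat_coe]
    omega
  rw [staircase, Finsupp.finsetSum_apply]
  simp only [hterm, Finset.sum_ite_eq, Finset.mem_range]
  split_ifs <;> omega

theorem hasDivDiff_monomial_staircase {R : Type*} [CommRing R] {n : ℕ} {k : ℕ+}
    (hk : (k : ℕ) < n) :
    HasDivDiff k (monomial (staircase n) (1 : R))
      (monomial (staircase n - Finsupp.single k 1) 1) := by
  rw [HasDivDiff, sub_mul, X, X, monomial_mul, monomial_mul, one_mul, rename_monomial]
  congr 3 <;> ext j <;>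
    simp only [Finsupp.add_apply, Finsupp.tsub_apply, Finsupp.mapDomain_equiv_apply,
      Equiv.symm_swap, staircase_apply, Finsupp.single_apply, Equiv.swap_apply_def]
  all_goals
    have := PNat.pos k
    simp only [← PNat.coe_inj, PNat.add_coe, PNat.one_coe, apply_ite PNat.val] at *
    split_ifs <;> omega

end Staircase

namespace IsSchubertFamily

section

variable {R : Type*} [CommRing R] {SP : Equiv.Perm ℕ+ → MvPolynomial ℕ+ R}

theorem hasDivDiff [IsDomain R] (hSP : IsSchubertFamily SP) {π : Equiv.Perm ℕ+}
    (hπ : FinitelySupported π) (i : ℕ+) :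
    HasDivDiff i (SP π) (if len (π * r i) + 1 = len π then SP (π * r i) else 0) := by
  split_ifs with hdesc
  · exact hSP.2 π hπ i hdesc
  -- at an ascent, `S_π = ∂ᵢ S_{π rᵢ}` is symmetric in `xᵢ, xᵢ₊₁`
  have hlen : len (π * r i * r i) + 1 = len (π * r i) := by
    have := len_mul_simpleTransposition_eq_or hπ i
    rw [mul_assoc, simpleTransposition_mul_self, mul_one]
    omega
  have h := hSP.2 _ (hπ.mul (finitelySupported_simpleTransposition i)) i hlen
  rw [mul_assoc, simpleTransposition_mul_self, mul_one] at h
  exact hasDivDiff_of_rename_swap (HasDivDiff.rename_swap h)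

theorem apply_w0 (hSP : IsSchubertFamily SP) (n : ℕ) :
    SP (w0 n) = monomial (staircase n) 1 := by
  rw [hSP.1, staircase, monomial_sum_one]
  exact Finset.prod_congr rfl fun i _ => X_pow_eq_monomial

theorem apply_w0_mul_simpleTransposition [IsDomain R] (hSP : IsSchubertFamily SP) {n : ℕ}
    {k : ℕ+} (hk : (k : ℕ) < n) :
    SP (w0 n * r k) = monomial (staircase n - Finsupp.single k 1) 1 := by
  have hdesc : len (w0 n * r k) + 1 = len (w0 n) := by
    rwa [len_mul_simpleTransposition_add_one_iff (finitelySupported_w0 n),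
      w0_apply_add_one_lt_iff]
  have h := hSP.hasDivDiff (finitelySupported_w0 n) k
  rw [if_pos hdesc, hSP.apply_w0] at h
  exact h.unique (hasDivDiff_monomial_staircase hk)

end

end IsSchubertFamily

noncomputable def nablaSummand (SP : Equiv.Perm ℕ+ → MvPolynomial ℕ+ ℤ) (π : Equiv.Perm ℕ+)
    (i : ℕ+) : MvPolynomial ℕ+ ℤ :=
  if len (r i * π) + 1 = len π then ((i : ℕ) : ℤ) • SP (r i * π) else 0

theorem hasFiniteSupport_nablaSummand (SP : Equiv.Perm ℕ+ → MvPolynomial ℕ+ ℤ)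
    {π : Equiv.Perm ℕ+} (hπ : FinitelySupported π) :
    Function.HasFiniteSupport (nablaSummand SP π) := by
  obtain ⟨N, hN⟩ := hπ.exists_fixesAbove
  refine (Set.finite_Iic N).subset fun j hj => Set.mem_Iic.mpr (not_lt.mp fun hjN => hj ?_)
  have hj1 : N < j + 1 := hjN.trans (PNat.lt_add_right j 1)
  have hasc : π⁻¹ j < π⁻¹ (j + 1) := by
    rw [hN.inv j hjN, hN.inv _ hj1]
    exact PNat.lt_add_right j 1
  have hnotDesc : ¬len (r j * π) + 1 = len π := by
    rw [len_simpleTransposition_mul, len_mul_simpleTransposition_of_lt hπ.inv hasc, len_inv]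
    omega
  exact if_neg hnotDesc

namespace IsSchubertFamily

variable {SP : Equiv.Perm ℕ+ → MvPolynomial ℕ+ ℤ}

theorem nabla_apply_w0 (hSP : IsSchubertFamily SP) (n : ℕ) :
    nabla (SP (w0 n)) = ∑ᶠ j, nablaSummand SP (w0 n) j := by
  -- reindex by `w0 (n - 1)`, which is `j ↦ n - j` for `j < n`: `rⱼ w₀ = w₀ r_{n-j}`
  rw [hSP.apply_w0, nabla, ← finsum_comp_equiv (w0 (n - 1))]
  refine finsum_congr fun j => ?_
  rw [pderiv_monomial, one_mul, staircase_apply, nablaSummand]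
  have := PNat.pos j
  by_cases hj : (j : ℕ) < n
  · have hw0 : (w0 (n - 1) j : ℕ) = n - j := by rw [w0_coe, if_pos (by omega)]; omega
    have hk : (w0 (n - 1) j : ℕ) < n := by omega
    rw [if_pos ((len_simpleTransposition_mul_w0_add_one_iff n j).mpr hj),
      simpleTransposition_mul_w0 hj, hSP.apply_w0_mul_simpleTransposition hk, smul_monomial,
      zsmul_eq_mul, mul_one]
    congr 2
    omega
  · have hw0 : (w0 (n - 1) j : ℕ) = j := by rw [w0_coe, if_neg (by omega)]
    rw [if_neg (mt (len_simpleTransposition_mul_w0_add_one_iff n j).mp hj),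
      show n - (w0 (n - 1) j : ℕ) = 0 by omega, Nat.cast_zero, monomial_zero]

theorem hasDivDiff_nablaSummand (hSP : IsSchubertFamily SP) {π : Equiv.Perm ℕ+}
    (hπ : FinitelySupported π) {i : ℕ+} (hasc : len (π * r i) = len π + 1) (j : ℕ+) :
    HasDivDiff i (nablaSummand SP (π * r i) j) (nablaSummand SP π j) := by
  have hπi := hπ.mul (finitelySupported_simpleTransposition i)
  have hjπi := (finitelySupported_simpleTransposition j).mul hπi
  unfold nablaSummand
  by_cases hj : len (r j * (π * r i)) + 1 = len (π * r i)
  · have h := (hSP.hasDivDiff hjπi i).zsmul (j : ℤ)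
    have hσ : r j * (π * r i) * r i = r j * π := by simp [mul_assoc]
    have hlen : len (r j * (π * r i)) = len π := by omega
    rw [if_pos hj]
    rwa [hσ, hlen, smul_ite, smul_zero] at h
  -- otherwise `ℓ(rⱼ π rᵢ) = ℓ(π) + 2`, which leaves no room for `ℓ(rⱼ π) = ℓ(π) - 1`
  have h₁ := len_simpleTransposition_mul_eq_or hπ j
  have h₂ := len_simpleTransposition_mul_eq_or hπi j
  have h₃ := len_mul_simpleTransposition_eq_or ((finitelySupported_simpleTransposition j).mul hπ) i
  rw [mul_assoc] at h₃
  rw [if_neg hj, if_neg (by omega)]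
  exact hasDivDiff_of_rename_swap (map_zero _)

theorem nabla_apply_of_ascent (hSP : IsSchubertFamily SP) {π : Equiv.Perm ℕ+}
    (hπ : FinitelySupported π) {i : ℕ+} (hasc : len (π * r i) = len π + 1)
    (ih : nabla (SP (π * r i)) = ∑ᶠ j, nablaSummand SP (π * r i) j) :
    nabla (SP π) = ∑ᶠ j, nablaSummand SP π j := by
  have hπi := hπ.mul (finitelySupported_simpleTransposition i)
  have h := hSP.hasDivDiff hπi i
  rw [mul_assoc, simpleTransposition_mul_self, mul_one, if_pos (by omega)] at h
  refine h.nabla.unique ?_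
  rw [ih]
  exact HasDivDiff.finsum (hasDivDiff_nablaSummand hSP hπ hasc)
    (hasFiniteSupport_nablaSummand SP hπi)

theorem nabla_apply_of_fixesAbove (hSP : IsSchubertFamily SP) {N : ℕ+} {π : Equiv.Perm ℕ+}
    (hπ : FixesAbove N π) : nabla (SP π) = ∑ᶠ j, nablaSummand SP π j := by
  induction hk : (Set.Iic (N, N)).ncard - len π using Nat.strong_induction_on generalizing π with
  | _ k ih =>
  by_cases hdesc : ∀ i < N, π (i + 1) < π i
  · rw [hπ.eq_w0 hdesc]
    exact hSP.nabla_apply_w0 N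
  push Not at hdesc
  obtain ⟨i, hiN, hi⟩ := hdesc
  have hasc := len_mul_simpleTransposition_of_lt hπ.finitelySupported
    (hi.lt_of_ne (π.injective.ne (PNat.lt_add_right i 1).ne))
  have hπi : FixesAbove N (π * r i) := hπ.mul (fixesAbove_simpleTransposition hiN)
  have := hπi.len_le
  exact hSP.nabla_apply_of_ascent hπ.finitelySupported hasc (ih _ (by omega) hπi rfl)

end IsSchubertFamily

/-- `∇ S_π = Σ_{i ≥ 1, ℓ(rᵢπ) = ℓ(π) − 1} i · S_{rᵢπ}`; in particular `∇` takes Schubert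
polynomials to nonnegative integer combinations of Schubert polynomials. -/
theorem nabla_schubert
    (SP : Equiv.Perm ℕ+ → MvPolynomial ℕ+ ℤ) (hSP : IsSchubertFamily SP)
    (π : Equiv.Perm ℕ+) (hπ : FinitelySupported π) :
    nabla (SP π)
      = ∑ᶠ i : ℕ+,
          if len (simpleTransposition i * π) + 1 = len π
          then ((i : ℕ) : ℤ) • SP (simpleTransposition i * π) else 0 := by
  obtain ⟨N, hN⟩ := hπ.exists_fixesAbove
  exact hSP.nabla_apply_of_fixesAbove hN
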